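/- arXiv:2412.09070 — 11 statements merged into one kernel-verified Lean document; each statement's English description precedes it below -/
import Mathlib

section
/- For any four unit vectors r₁, r₂, r₃, r₄ in ℝ³, the determinant det(r₁+r₂, r₂+r₃, r₃+r₄) satisfies -16/(3√3) ≤ det(r₁+r₂, r₂+r₃, r₃+r₄) ≤ 16/(3√3). -/
open Real Matrix

set_option maxHeartbeats 1000000


-- core cubic inequality in inner products p=b·c, q=b·d, r=c·d
theorem aux_cube (p q r X Y : ℝ) (hp : p^2 ≤ 1) (hq : q^2 ≤ 1) (hr : r^2 ≤ 1)
    (hX : X = 1 + 2*(p*q*r) - p^2 - q^2 - r^2)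
    (hY : Y = 3 - p^2 - q^2 - r^2 + 2*(r - p*q + p*r - q + p - q*r)) :
    3*X + Y ≤ 64/9 := by
  have h1 : p ≤ 1 := by nlinarith [sq_nonneg (p-1)]
  have h2 : -1 ≤ p := by nlinarith [sq_nonneg (p+1)]
  have h3 : q ≤ 1 := by nlinarith [sq_nonneg (q-1)]
  have h4 : -1 ≤ q := by nlinarith [sq_nonneg (q+1)]
  have h5 : r ≤ 1 := by nlinarith [sq_nonneg (r-1)]
  have h6 : -1 ≤ r := by nlinarith [sq_nonneg (r+1)]
  have t1 : 0 ≤ (1-p)*(-q - r)^2 := mul_nonneg (by linarith) (sq_nonneg _)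
  have t2 : 0 ≤ (1+q)*(r - p)^2 := mul_nonneg (by linarith) (sq_nonneg _)
  have t3 : 0 ≤ (1-r)*(p + q)^2 := mul_nonneg (by linarith) (sq_nonneg _)
  have t4 : 0 ≤ (1+p)*(-q - r)^2 := mul_nonneg (by linarith) (sq_nonneg _)
  have t5 : 0 ≤ (1-q)*(r - p)^2 := mul_nonneg (by linarith) (sq_nonneg _)
  have t6 : 0 ≤ (1+r)*(p + q)^2 := mul_nonneg (by linarith) (sq_nonneg _)
  have t7 : 0 ≤ (p - q + r - 1)^2 := sq_nonneg _
  have t8 : 0 ≤ (1+p)*(-q + r - 2/3)^2 := mul_nonneg (by linarith) (sq_nonneg _)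
  have t9 : 0 ≤ (1-q)*(r + p - 2/3)^2 := mul_nonneg (by linarith) (sq_nonneg _)
  have t10 : 0 ≤ (1+r)*(p - q - 2/3)^2 := mul_nonneg (by linarith) (sq_nonneg _)
  linarith [t1,t2,t3,t4,t5,t6,t7,t8,t9,t10]

theorem aux_sqrt (X Y : ℝ) (hX0 : 0 ≤ X) (hY0 : 0 ≤ Y) (h3XY : 3*X + Y ≤ 64/9) :
    Real.sqrt X + Real.sqrt Y ≤ 16/(3*Real.sqrt 3) := by
  have hsx := Real.sqrt_nonneg X
  have hsy := Real.sqrt_nonneg Y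
  have esx : (Real.sqrt X)^2 = X := Real.sq_sqrt hX0
  have esy : (Real.sqrt Y)^2 = Y := Real.sq_sqrt hY0
  have hsum2 : (Real.sqrt X + Real.sqrt Y)^2 ≤ 256/27 := by
    nlinarith [sq_nonneg (3*Real.sqrt X - Real.sqrt Y)]
  have hC : 0 < 16/(3*Real.sqrt 3) := by positivity
  have hC2 : (16/(3*Real.sqrt 3))^2 = 256/27 := by
    rw [div_pow, mul_pow, Real.sq_sqrt (by norm_num : (0:ℝ) ≤ 3)]
    norm_num
  nlinarith [hsum2, hC2, hC, hsx, hsy]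

theorem key (a0 a1 a2 b0 b1 b2 c0 c1 c2 d0 d1 d2 : ℝ)
    (ha : a0^2+a1^2+a2^2 = 1) (hb : b0^2+b1^2+b2^2 = 1)
    (hc : c0^2+c1^2+c2^2 = 1) (hd : d0^2+d1^2+d2^2 = 1) :
    -(16/(3*Real.sqrt 3))
      ≤ (a0+b0) * ((b1+c1)*(c2+d2) - (b2+c2)*(c1+d1))
        - (b0+c0) * ((a1+b1)*(c2+d2) - (a2+b2)*(c1+d1))
        + (c0+d0) * ((a1+b1)*(b2+c2) - (a2+b2)*(b1+c1)) ∧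
    (a0+b0) * ((b1+c1)*(c2+d2) - (b2+c2)*(c1+d1))
        - (b0+c0) * ((a1+b1)*(c2+d2) - (a2+b2)*(c1+d1))
        + (c0+d0) * ((a1+b1)*(b2+c2) - (a2+b2)*(b1+c1)) ≤ 16/(3*Real.sqrt 3) := by
  obtain ⟨n0, hn0⟩ : ∃ t : ℝ, t = (b1+c1)*(c2+d2) - (b2+c2)*(c1+d1) := ⟨_, rfl⟩
  obtain ⟨n1, hn1⟩ : ∃ t : ℝ, t = (b2+c2)*(c0+d0) - (b0+c0)*(c2+d2) := ⟨_, rfl⟩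
  obtain ⟨n2, hn2⟩ : ∃ t : ℝ, t = (b0+c0)*(c1+d1) - (b1+c1)*(c0+d0) := ⟨_, rfl⟩
  obtain ⟨e, he⟩ : ∃ t : ℝ, t = b0*(c1*d2 - c2*d1) - c0*(b1*d2 - b2*d1) + d0*(b1*c2 - b2*c1) := ⟨_, rfl⟩
  obtain ⟨dot, hdot⟩ : ∃ t : ℝ, t = a0*n0 + a1*n1 + a2*n2 := ⟨_, rfl⟩
  have hsplit : (a0+b0) * ((b1+c1)*(c2+d2) - (b2+c2)*(c1+d1))
        - (b0+c0) * ((a1+b1)*(c2+d2) - (a2+b2)*(c1+d1))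
        + (c0+d0) * ((a1+b1)*(b2+c2) - (a2+b2)*(b1+c1)) = dot + e := by
    rw [hdot, hn0, hn1, hn2, he]; ring
  obtain ⟨p, hp⟩ : ∃ t : ℝ, t = b0*c0+b1*c1+b2*c2 := ⟨_, rfl⟩
  obtain ⟨q, hq⟩ : ∃ t : ℝ, t = b0*d0+b1*d1+b2*d2 := ⟨_, rfl⟩
  obtain ⟨r, hr⟩ : ∃ t : ℝ, t = c0*d0+c1*d1+c2*d2 := ⟨_, rfl⟩
  obtain ⟨X, hX⟩ : ∃ t : ℝ, t = e^2 := ⟨_, rfl⟩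
  obtain ⟨Y, hY⟩ : ∃ t : ℝ, t = n0^2+n1^2+n2^2 := ⟨_, rfl⟩
  have hXval : X = 1 + 2*(p*q*r) - p^2 - q^2 - r^2 := by
    have h : X = (b0^2+b1^2+b2^2)*((c0^2+c1^2+c2^2)*(d0^2+d1^2+d2^2) - r^2)
        - p*(p*(d0^2+d1^2+d2^2) - r*q) + q*(p*r - q*(c0^2+c1^2+c2^2)) := by
      rw [hX, he, hp, hq, hr]; ring
    rw [hb, hc, hd] at h
    rw [h]; ring
  have hYval : Y = 3 - p^2 - q^2 - r^2 + 2*(r - p*q + p*r - q + p - q*r) := by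
    have h : Y = ((b0^2+b1^2+b2^2)*(c0^2+c1^2+c2^2) - p^2)
        + ((b0^2+b1^2+b2^2)*(d0^2+d1^2+d2^2) - q^2)
        + ((c0^2+c1^2+c2^2)*(d0^2+d1^2+d2^2) - r^2)
        + 2*(((b0^2+b1^2+b2^2)*r - p*q) + (p*r - (c0^2+c1^2+c2^2)*q)
            + (p*(d0^2+d1^2+d2^2) - q*r)) := by
      rw [hY, hn0, hn1, hn2, hp, hq, hr]; ring
    rw [hb, hc, hd] at h
    rw [h]; ring
  have hp2 : p^2 ≤ 1 := by
    have h : (b0^2+b1^2+b2^2)*(c0^2+c1^2+c2^2) - p^2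
        = (b0*c1-b1*c0)^2 + (b0*c2-b2*c0)^2 + (b1*c2-b2*c1)^2 := by rw [hp]; ring
    rw [hb, hc] at h
    linarith [sq_nonneg (b0*c1-b1*c0), sq_nonneg (b0*c2-b2*c0), sq_nonneg (b1*c2-b2*c1)]
  have hq2 : q^2 ≤ 1 := by
    have h : (b0^2+b1^2+b2^2)*(d0^2+d1^2+d2^2) - q^2
        = (b0*d1-b1*d0)^2 + (b0*d2-b2*d0)^2 + (b1*d2-b2*d1)^2 := by rw [hq]; ring
    rw [hb, hd] at h
    linarith [sq_nonneg (b0*d1-b1*d0), sq_nonneg (b0*d2-b2*d0), sq_nonneg (b1*d2-b2*d1)]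
  have hr2 : r^2 ≤ 1 := by
    have h : (c0^2+c1^2+c2^2)*(d0^2+d1^2+d2^2) - r^2
        = (c0*d1-c1*d0)^2 + (c0*d2-c2*d0)^2 + (c1*d2-c2*d1)^2 := by rw [hr]; ring
    rw [hc, hd] at h
    linarith [sq_nonneg (c0*d1-c1*d0), sq_nonneg (c0*d2-c2*d0), sq_nonneg (c1*d2-c2*d1)]
  have h3XY : 3*X + Y ≤ 64/9 := aux_cube p q r X Y hp2 hq2 hr2 hXval hYval
  have hX0 : 0 ≤ X := hX ▸ sq_nonneg e
  have hY0 : 0 ≤ Y := by rw [hY]; positivity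
  have hdot2 : dot^2 ≤ Y := by
    have h : Y - dot^2 = (a0*n1-a1*n0)^2 + (a0*n2-a2*n0)^2 + (a1*n2-a2*n1)^2
        + (1-(a0^2+a1^2+a2^2))*Y := by rw [hY, hdot]; ring
    rw [ha] at h
    linarith [sq_nonneg (a0*n1-a1*n0), sq_nonneg (a0*n2-a2*n0), sq_nonneg (a1*n2-a2*n1)]
  have habs_dot : |dot| ≤ Real.sqrt Y := by
    rw [← Real.sqrt_sq_eq_abs]; exact Real.sqrt_le_sqrt hdot2
  have habs_e : |e| ≤ Real.sqrt X := by
    rw [← Real.sqrt_sq_eq_abs, hX]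
  have hfin : Real.sqrt X + Real.sqrt Y ≤ 16/(3*Real.sqrt 3) :=
    aux_sqrt X Y hX0 hY0 h3XY
  rw [hsplit]
  obtain ⟨hd1, hd2⟩ := abs_le.mp habs_dot
  obtain ⟨he1, he2⟩ := abs_le.mp habs_e
  constructor
  · linarith
  · linarith


/-- Determinant of the 3×3 matrix with columns `u`, `v`, `w`. -/
noncomputable def det3 (u v w : EuclideanSpace ℝ (Fin 3)) : ℝ :=
  Matrix.det (Matrix.of ![(u : Fin 3 → ℝ), (v : Fin 3 → ℝ), (w : Fin 3 → ℝ)])ᵀ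

theorem stmt_2 (r₁ r₂ r₃ r₄ : EuclideanSpace ℝ (Fin 3))
    (h₁ : ‖r₁‖ = 1) (h₂ : ‖r₂‖ = 1) (h₃ : ‖r₃‖ = 1) (h₄ : ‖r₄‖ = 1) :
    -(16 / (3 * Real.sqrt 3)) ≤ det3 (r₁ + r₂) (r₂ + r₃) (r₃ + r₄) ∧
      det3 (r₁ + r₂) (r₂ + r₃) (r₃ + r₄) ≤ 16 / (3 * Real.sqrt 3) := by
  have norm_sq : ∀ x : EuclideanSpace ℝ (Fin 3), ‖x‖ = 1 →
      x 0 ^ 2 + x 1 ^ 2 + x 2 ^ 2 = 1 := by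
    intro x hx
    have h : Real.sqrt (∑ i, x i ^ 2) = 1 := by
      rw [← hx, EuclideanSpace.norm_eq]
      simp [Real.norm_eq_abs, sq_abs]
    rw [Real.sqrt_eq_one] at h
    simpa [Fin.sum_univ_three] using h
  have ha := norm_sq r₁ h₁
  have hb := norm_sq r₂ h₂
  have hc := norm_sq r₃ h₃
  have hd := norm_sq r₄ h₄
  have hdet : det3 (r₁ + r₂) (r₂ + r₃) (r₃ + r₄)
      = (r₁ 0 + r₂ 0) * ((r₂ 1 + r₃ 1)*(r₃ 2 + r₄ 2) - (r₂ 2 + r₃ 2)*(r₃ 1 + r₄ 1))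
        - (r₂ 0 + r₃ 0) * ((r₁ 1 + r₂ 1)*(r₃ 2 + r₄ 2) - (r₁ 2 + r₂ 2)*(r₃ 1 + r₄ 1))
        + (r₃ 0 + r₄ 0) * ((r₁ 1 + r₂ 1)*(r₂ 2 + r₃ 2) - (r₁ 2 + r₂ 2)*(r₂ 1 + r₃ 1)) := by
    simp only [det3, Matrix.det_transpose, Matrix.det_fin_three, Matrix.of_apply,
      Matrix.cons_val', Matrix.cons_val_zero, Matrix.cons_val_one, Matrix.head_cons,
      Matrix.empty_val', Matrix.cons_val_fin_one, Matrix.head_fin_const,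
      Matrix.cons_val_two, Matrix.tail_cons, PiLp.add_apply]
    ring
  rw [hdet]
  exact key (r₁ 0) (r₁ 1) (r₁ 2) (r₂ 0) (r₂ 1) (r₂ 2) (r₃ 0) (r₃ 1) (r₃ 2)
    (r₄ 0) (r₄ 1) (r₄ 2) ha hb hc hd
end

section
/- For any three unit vectors r₁, r₂, r₃ in ℝ³, setting x = (1 + ⟨r₁,r₂⟩ + ⟨r₂,r₃⟩ + ⟨r₁,r₃⟩)/4 and y = det(r₁,r₂,r₃)/4, one has x² + y² ≤ ((2x+1)/3)³. -/
open Real Matrix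

/-!
With `a, b, c` the pairwise inner products, the Gram matrix of `r₁, r₂, r₃` has determinant
`det3 r₁ r₂ r₃ ^ 2 = 1 + 2abc - a² - b² - c²`, so `y` is eliminated and the claim becomes a cubic
inequality in `a, b, c`. Its gap, times 432, is `∑ (a - b)² (a + b + 7c + 9)` over the cyclic
permutations, which is nonnegative because `a, b, c ≥ -1`.
-/

open scoped InnerProductSpace

theorem det_sq_eq_det_gram {n : Type*} [Fintype n] [DecidableEq n]
    (v : n → EuclideanSpace ℝ n) :
    (of fun i j ↦ v j i).det ^ 2 = (gram ℝ v).det := by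
  rw [gram_eq_conjTranspose_mul (EuclideanSpace.basisFun n ℝ), det_mul, det_conjTranspose,
    star_trivial, sq]
  rfl

theorem det3_eq_det (u v w : EuclideanSpace ℝ (Fin 3)) :
    det3 u v w = (of fun i j ↦ ![u, v, w] j i).det := by
  rw [det3]
  congr 1
  ext i j
  fin_cases j <;> rfl

theorem det_gram_of_norm_eq_one {F : Type*} [NormedAddCommGroup F] [InnerProductSpace ℝ F]
    {u v w : F} (hu : ‖u‖ = 1) (hv : ‖v‖ = 1) (hw : ‖w‖ = 1) :
    (gram ℝ ![u, v, w]).det =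
      1 + 2 * ⟪u, v⟫_ℝ * ⟪v, w⟫_ℝ * ⟪u, w⟫_ℝ - ⟪u, v⟫_ℝ ^ 2 - ⟪v, w⟫_ℝ ^ 2 - ⟪u, w⟫_ℝ ^ 2 := by
  simp only [det_fin_three, gram_apply, cons_val_zero, cons_val_one, cons_val_two, head_cons,
    tail_cons]
  rw [real_inner_self_eq_norm_sq, real_inner_self_eq_norm_sq, real_inner_self_eq_norm_sq,
    hu, hv, hw, real_inner_comm u v, real_inner_comm v w, real_inner_comm u w]
  ring

theorem bargmann_ineq_of_sq_eq_gram_det {a b c D : ℝ} (ha : -1 ≤ a) (hb : -1 ≤ b) (hc : -1 ≤ c)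
    (hD : D ^ 2 = 1 + 2 * a * b * c - a ^ 2 - b ^ 2 - c ^ 2) :
    ((1 + a + b + c) / 4) ^ 2 + (D / 4) ^ 2 ≤ ((2 * ((1 + a + b + c) / 4) + 1) / 3) ^ 3 := by
  have hab : 0 ≤ (a - b) ^ 2 * (a + b + 7 * c + 9) := mul_nonneg (sq_nonneg _) (by linarith)
  have hbc : 0 ≤ (b - c) ^ 2 * (7 * a + b + c + 9) := mul_nonneg (sq_nonneg _) (by linarith)
  have hca : 0 ≤ (c - a) ^ 2 * (a + 7 * b + c + 9) := mul_nonneg (sq_nonneg _) (by linarith)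
  linear_combination (hab + hbc + hca) / 432 + hD / 16

theorem stmt_6 (r₁ r₂ r₃ : EuclideanSpace ℝ (Fin 3))
    (h₁ : ‖r₁‖ = 1) (h₂ : ‖r₂‖ = 1) (h₃ : ‖r₃‖ = 1) :
    let x : ℝ := (1 + (inner ℝ r₁ r₂ : ℝ) + (inner ℝ r₂ r₃ : ℝ) + (inner ℝ r₁ r₃ : ℝ)) / 4
    let y : ℝ := det3 r₁ r₂ r₃ / 4
    x ^ 2 + y ^ 2 ≤ ((2 * x + 1) / 3) ^ 3 :=
  bargmann_ineq_of_sq_eq_gram_det (neg_one_le_real_inner_of_norm_eq_one h₁ h₂)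
    (neg_one_le_real_inner_of_norm_eq_one h₂ h₃) (neg_one_le_real_inner_of_norm_eq_one h₁ h₃)
    (by rw [det3_eq_det, det_sq_eq_det_gram, det_gram_of_norm_eq_one h₁ h₂ h₃])
end

section
/- For three unit vectors r₁, r₂, r₃ in ℝ³, |det(r₁,r₂,r₃)| ≤ 1, with equality achievable; consequently the imaginary part y = det(r₁,r₂,r₃)/4 of the third-order Bargmann invariant of pure qubit states ranges over [-1/4, 1/4]. -/
/-!
The determinant is the triple product `⟪r₁, r₂ × r₃⟫`. Cauchy–Schwarz together with Lagrange's
identity `‖v × w‖² = ‖v‖²‖w‖² - ⟪v, w⟫²` gives Hadamard's bound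
`|det(r₁, r₂, r₃)| ≤ ‖r₁‖ ‖r₂‖ ‖r₃‖`. Conversely `det(e₀, e₁, w) = w₂`, and a unit vector can have
any third coordinate in `[-1, 1]`.
-/

open Real Matrix

open WithLp

noncomputable def cross3 (v w : EuclideanSpace ℝ (Fin 3)) : EuclideanSpace ℝ (Fin 3) :=
  toLp 2 (ofLp v ⨯₃ ofLp w)

lemma det3_eq_inner_cross3 (u v w : EuclideanSpace ℝ (Fin 3)) :
    det3 u v w = inner ℝ u (cross3 v w) := by
  rw [det3, det_transpose, cross3, EuclideanSpace.inner_eq_star_dotProduct, star_trivial,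
    dotProduct_comm, triple_product_eq_det]
  rfl

lemma norm_cross3_sq (v w : EuclideanSpace ℝ (Fin 3)) :
    ‖cross3 v w‖ ^ 2 = ‖v‖ ^ 2 * ‖w‖ ^ 2 - inner ℝ v w ^ 2 := by
  simp only [← real_inner_self_eq_norm_sq, cross3, EuclideanSpace.inner_eq_star_dotProduct,
    star_trivial, cross_dot_cross]
  rw [dotProduct_comm (ofLp w) (ofLp v)]
  ring

lemma norm_cross3_le (v w : EuclideanSpace ℝ (Fin 3)) : ‖cross3 v w‖ ≤ ‖v‖ * ‖w‖ := by
  rw [← pow_le_pow_iff_left₀ (norm_nonneg _) (by positivity) two_ne_zero, norm_cross3_sq,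
    mul_pow]
  nlinarith [sq_nonneg (inner ℝ v w)]

theorem abs_det3_le (u v w : EuclideanSpace ℝ (Fin 3)) : |det3 u v w| ≤ ‖u‖ * ‖v‖ * ‖w‖ := by
  rw [det3_eq_inner_cross3, mul_assoc]
  exact (abs_real_inner_le_norm u _).trans
    (mul_le_mul_of_nonneg_left (norm_cross3_le v w) (norm_nonneg u))

lemma abs_det3_le_one {u v w : EuclideanSpace ℝ (Fin 3)} (hu : ‖u‖ = 1) (hv : ‖v‖ = 1)
    (hw : ‖w‖ = 1) : |det3 u v w| ≤ 1 := by
  simpa [hu, hv, hw] using abs_det3_le u v w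

lemma det3_single_single (w : EuclideanSpace ℝ (Fin 3)) :
    det3 (EuclideanSpace.single 0 1) (EuclideanSpace.single 1 1) w = w 2 := by
  rw [det3, det_transpose, det_fin_three]
  simp

lemma exists_norm_eq_one_apply_two_eq {t : ℝ} (ht : t ∈ Set.Icc (-1 : ℝ) 1) :
    ∃ w : EuclideanSpace ℝ (Fin 3), ‖w‖ = 1 ∧ w 2 = t := by
  refine ⟨!₂[0, √(1 - t ^ 2), t], ?_, rfl⟩
  have h : 0 ≤ 1 - t ^ 2 := by nlinarith [ht.1, ht.2]
  rw [EuclideanSpace.norm_eq, Real.sqrt_eq_one, Fin.sum_univ_three]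
  simp [sq_sqrt h]

lemma exists_det3_eq {t : ℝ} (ht : t ∈ Set.Icc (-1 : ℝ) 1) :
    ∃ u v w : EuclideanSpace ℝ (Fin 3), ‖u‖ = 1 ∧ ‖v‖ = 1 ∧ ‖w‖ = 1 ∧ det3 u v w = t := by
  obtain ⟨w, hw, hwt⟩ := exists_norm_eq_one_apply_two_eq ht
  exact ⟨_, _, w, by simp, by simp, hw, (det3_single_single w).trans hwt⟩

theorem stmt_7 :
    (∀ r₁ r₂ r₃ : EuclideanSpace ℝ (Fin 3),
        ‖r₁‖ = 1 → ‖r₂‖ = 1 → ‖r₃‖ = 1 → |det3 r₁ r₂ r₃| ≤ 1) ∧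
    (∃ r₁ r₂ r₃ : EuclideanSpace ℝ (Fin 3),
        ‖r₁‖ = 1 ∧ ‖r₂‖ = 1 ∧ ‖r₃‖ = 1 ∧ |det3 r₁ r₂ r₃| = 1) ∧
    {y : ℝ | ∃ r₁ r₂ r₃ : EuclideanSpace ℝ (Fin 3),
        ‖r₁‖ = 1 ∧ ‖r₂‖ = 1 ∧ ‖r₃‖ = 1 ∧ y = det3 r₁ r₂ r₃ / 4} =
      Set.Icc (-(1 / 4) : ℝ) (1 / 4) := by
  refine ⟨fun _ _ _ ↦ abs_det3_le_one, ?_, ?_⟩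
  · obtain ⟨r₁, r₂, r₃, h₁, h₂, h₃, hd⟩ := exists_det3_eq (t := 1) (by norm_num)
    exact ⟨r₁, r₂, r₃, h₁, h₂, h₃, by rw [hd, abs_one]⟩
  · ext y
    constructor
    · rintro ⟨r₁, r₂, r₃, h₁, h₂, h₃, rfl⟩
      obtain ⟨hl, hr⟩ := abs_le.mp (abs_det3_le_one h₁ h₂ h₃)
      constructor <;> linarith
    · rintro ⟨hl, hr⟩
      obtain ⟨r₁, r₂, r₃, h₁, h₂, h₃, hd⟩ := exists_det3_eq (t := 4 * y) ⟨by linarith, by linarith⟩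
      exact ⟨r₁, r₂, r₃, h₁, h₂, h₃, by rw [hd]; ring⟩
end

section
/- For pure qubit states with unit Bloch vectors r₁, r₂, r₃, the real part of Tr(ρ₁ρ₂ρ₃), namely x = (1 + ⟨r₁,r₂⟩ + ⟨r₂,r₃⟩ + ⟨r₁,r₃⟩)/4, ranges over the interval [-1/8, 1]. -/
open Real RealInnerProductSpace

/-!
Writing `σ = ⟪r₁,r₂⟫ + ⟪r₂,r₃⟫ + ⟪r₁,r₃⟫`, each inner product of unit vectors is at most `1`,
so `σ ≤ 3`, and `0 ≤ ‖r₁ + r₂ + r₃‖² = 3 + 2σ` gives `σ ≥ -3/2`. Conversely, the unit vectors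
`c e + s f`, `c e - s f`, `e` (with `e, f` orthonormal and `c² + s² = 1`) give the value
`(c² + c) / 2`, which sweeps `[-1/8, 1]` as `c` runs over `[-1/2, 1]`.
-/

section InnerProductSpace

variable {E : Type*} [NormedAddCommGroup E] [InnerProductSpace ℝ E]

theorem norm_add_add_sq_real (a b c : E) :
    ‖a + b + c‖ ^ 2 = ‖a‖ ^ 2 + ‖b‖ ^ 2 + ‖c‖ ^ 2 + 2 * (⟪a, b⟫ + ⟪b, c⟫ + ⟪a, c⟫) := by
  rw [norm_add_sq_real, norm_add_sq_real, inner_add_left]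
  ring

theorem neg_three_halves_le_inner_add_inner_add_inner {a b c : E}
    (ha : ‖a‖ = 1) (hb : ‖b‖ = 1) (hc : ‖c‖ = 1) :
    -(3 / 2) ≤ ⟪a, b⟫ + ⟪b, c⟫ + ⟪a, c⟫ := by
  have h := norm_add_add_sq_real a b c
  rw [ha, hb, hc] at h
  nlinarith [sq_nonneg ‖a + b + c‖]

theorem exists_norm_eq_one_inner_add_inner_add_inner_eq {e f : E}
    (he : ‖e‖ = 1) (hf : ‖f‖ = 1) (hef : ⟪e, f⟫ = 0) {c : ℝ} (hc : c ^ 2 ≤ 1) :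
    ∃ r₁ r₂ r₃ : E, ‖r₁‖ = 1 ∧ ‖r₂‖ = 1 ∧ ‖r₃‖ = 1 ∧
      ⟪r₁, r₂⟫ + ⟪r₂, r₃⟫ + ⟪r₁, r₃⟫ = 2 * c ^ 2 + 2 * c - 1 := by
  set s := √(1 - c ^ 2)
  have hs : s ^ 2 = 1 - c ^ 2 := sq_sqrt (by linarith)
  have hee : ⟪e, e⟫ = 1 := inner_self_eq_one_of_norm_eq_one he
  have hff : ⟪f, f⟫ = 1 := inner_self_eq_one_of_norm_eq_one hf
  have hfe : ⟪f, e⟫ = 0 := by rw [real_inner_comm, hef]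
  have hnorm : ∀ t : ℝ, t ^ 2 = s ^ 2 → ‖c • e + t • f‖ = 1 := fun t ht => by
    rw [norm_eq_sqrt_real_inner]
    simp only [inner_add_left, inner_add_right, real_inner_smul_left, real_inner_smul_right,
      hee, hff, hef, hfe]
    convert sqrt_one using 2
    nlinarith
  refine ⟨c • e + s • f, c • e + (-s) • f, e, hnorm s rfl, hnorm (-s) (by ring), he, ?_⟩
  simp only [inner_add_left, inner_add_right, real_inner_smul_left, real_inner_smul_right,
    hee, hff, hef, hfe]
  nlinarith

end InnerProductSpace

theorem exists_sq_le_one_sq_add_eq {x : ℝ} (hl : -(1 / 8) ≤ x) (hu : x ≤ 1) :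
    ∃ c : ℝ, c ^ 2 ≤ 1 ∧ c ^ 2 + c = 2 * x := by
  have h8 : 0 ≤ 1 + 8 * x := by linarith
  have hsq := sq_sqrt h8
  have hle : √(1 + 8 * x) ≤ 3 := by nlinarith [sqrt_nonneg (1 + 8 * x)]
  refine ⟨(√(1 + 8 * x) - 1) / 2, ?_, ?_⟩ <;> nlinarith [sqrt_nonneg (1 + 8 * x)]

theorem stmt_8 :
    {x : ℝ | ∃ r₁ r₂ r₃ : EuclideanSpace ℝ (Fin 3),
        ‖r₁‖ = 1 ∧ ‖r₂‖ = 1 ∧ ‖r₃‖ = 1 ∧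
        x = (1 + (inner ℝ r₁ r₂ : ℝ) + (inner ℝ r₂ r₃ : ℝ) + (inner ℝ r₁ r₃ : ℝ)) / 4} =
      Set.Icc (-(1 / 8) : ℝ) 1 := by
  ext x
  constructor
  · rintro ⟨r₁, r₂, r₃, h₁, h₂, h₃, rfl⟩
    have := neg_three_halves_le_inner_add_inner_add_inner h₁ h₂ h₃
    have := real_inner_le_one_of_norm_eq_one h₁ h₂
    have := real_inner_le_one_of_norm_eq_one h₂ h₃
    have := real_inner_le_one_of_norm_eq_one h₁ h₃
    constructor <;> linarith
  · rintro ⟨hl, hu⟩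
    obtain ⟨c, hc, hcx⟩ := exists_sq_le_one_sq_add_eq hl hu
    obtain ⟨r₁, r₂, r₃, h₁, h₂, h₃, hsum⟩ :=
      exists_norm_eq_one_inner_add_inner_add_inner_eq
        (e := EuclideanSpace.single (0 : Fin 3) (1 : ℝ)) (f := EuclideanSpace.single 1 1)
        (by simp) (by simp) (by simp [EuclideanSpace.inner_single_left]) hc
    exact ⟨r₁, r₂, r₃, h₁, h₂, h₃, by linarith⟩
end

section
/- For every integer n ≥ 3, the function θ ↦ cosⁿ(π/n) secⁿ((θ−π)/n) (θ ∈ [0,2π]) satisfies the identity cosⁿ(π/n)·secⁿ((θ−π)/n)·e^{iθ} = ((ωₙ+1)/(ωₙ + e^{-2iθ/n}))ⁿ, where ωₙ = e^{-2πi/n}. -/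
open Real Complex

theorem stmt_10 (n : ℕ) (hn : 3 ≤ n) (θ : ℝ) (hθ : θ ∈ Set.Icc 0 (2 * π)) :
    (((Real.cos (π / n)) ^ n * ((Real.cos ((θ - π) / n))⁻¹) ^ n : ℝ) : ℂ) *
        Complex.exp (θ * Complex.I) =
      ((Complex.exp (-(2 * π) * Complex.I / n) + 1) /
          (Complex.exp (-(2 * π) * Complex.I / n) +
            Complex.exp (-(2 * θ) * Complex.I / n))) ^ n := by
  obtain ⟨hθ0, hθ2⟩ := hθ
  have hπ : (0:ℝ) < π := Real.pi_pos
  have h3 : (3:ℝ) ≤ n := by exact_mod_cast hn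
  have hn0 : (0:ℝ) < n := by linarith
  have hnC : (n:ℂ) ≠ 0 := by exact_mod_cast hn0.ne'
  have habs : |(θ - π) / n| < π / 2 := by
    rw [abs_div, abs_of_pos hn0]
    have h1 : |θ - π| ≤ π := abs_le.2 ⟨by linarith, by linarith⟩
    have h2 : |θ - π| / (n:ℝ) ≤ π / 3 :=
      div_le_div₀ (le_of_lt hπ) h1 (by norm_num) h3
    linarith
  have hcos : Real.cos ((θ - π) / n) ≠ 0 :=
    (Real.cos_pos_of_mem_Ioo ⟨(abs_lt.1 habs).1, (abs_lt.1 habs).2⟩).ne'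
  set x := Complex.exp (-(π:ℂ) * Complex.I / n) with hxdef
  set y := Complex.exp (-(θ:ℂ) * Complex.I / n) with hydef
  have hx : x ≠ 0 := Complex.exp_ne_zero _
  have hy : y ≠ 0 := Complex.exp_ne_zero _
  have hx2 : Complex.exp (-(2 * π) * Complex.I / n) = x ^ 2 := by
    rw [hxdef, ← Complex.exp_nat_mul]
    ring_nf
  have hy2 : Complex.exp (-(2 * θ) * Complex.I / n) = y ^ 2 := by
    rw [hydef, ← Complex.exp_nat_mul]
    ring_nf
  have hxinv : x⁻¹ = Complex.exp ((π:ℂ) * Complex.I / n) := by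
    rw [hxdef, ← Complex.exp_neg]
    ring_nf
  have hyinv : y⁻¹ = Complex.exp ((θ:ℂ) * Complex.I / n) := by
    rw [hydef, ← Complex.exp_neg]
    ring_nf
  have hcosπ : ((Real.cos (π / n) : ℝ) : ℂ) = (x⁻¹ + x) / 2 := by
    rw [Complex.ofReal_cos]
    have h2c := Complex.two_cos (x := ((π / n : ℝ) : ℂ))
    have he1 : ((π / n : ℝ) : ℂ) * Complex.I = (π:ℂ) * Complex.I / n := by
      push_cast; ring
    have he2 : -((π / n : ℝ) : ℂ) * Complex.I = -(π:ℂ) * Complex.I / n := by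
      push_cast; ring
    rw [neg_mul, ← neg_mul] at h2c
    rw [he1, he2, ← hxinv, ← hxdef] at h2c
    linear_combination h2c / 2
  have hcosθ : ((Real.cos ((θ - π) / n) : ℝ) : ℂ) = (x * y⁻¹ + x⁻¹ * y) / 2 := by
    rw [Complex.ofReal_cos]
    have h2c := Complex.two_cos (x := (((θ - π) / n : ℝ) : ℂ))
    have he1 : Complex.exp ((((θ - π) / n : ℝ) : ℂ) * Complex.I) = x * y⁻¹ := by
      rw [hyinv, hxdef, ← Complex.exp_add]
      congr 1
      push_cast; ring
    have he2 : Complex.exp (-(((θ - π) / n : ℝ) : ℂ) * Complex.I) = x⁻¹ * y := by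
      rw [hxinv, hydef, ← Complex.exp_add]
      congr 1
      push_cast; ring
    rw [neg_mul, ← neg_mul] at h2c
    rw [he1, he2] at h2c
    linear_combination h2c / 2
  have hd : x * y⁻¹ + x⁻¹ * y ≠ 0 := by
    intro h
    apply hcos
    have : ((Real.cos ((θ - π) / n) : ℝ) : ℂ) = 0 := by rw [hcosθ, h]; ring
    exact_mod_cast this
  have hden : x ^ 2 + y ^ 2 ≠ 0 := by
    have : x ^ 2 + y ^ 2 = x * y * (x * y⁻¹ + x⁻¹ * y) := by
      field_simp
    rw [this]
    exact mul_ne_zero (mul_ne_zero hx hy) hd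
  have hexpθ : Complex.exp ((θ:ℝ) * Complex.I) = (y⁻¹) ^ n := by
    rw [hyinv, ← Complex.exp_nat_mul]
    congr 1
    field_simp
  rw [hx2, hy2, hexpθ]
  push_cast [hcosπ, hcosθ]
  rw [← mul_pow, ← mul_pow]
  congr 1
  have hrw : (x * y⁻¹ + x⁻¹ * y) / 2 = (x ^ 2 + y ^ 2) / (2 * (x * y)) := by
    field_simp
  rw [hrw, inv_div, eq_div_iff hden]
  field_simp
  ring
end

section
/- For n ≥ 3 and t ∈ [0,1], define the pure qubit states |ψₖ(t)⟩ = sin t |0⟩ + ω̄ₙᵏ cos t |1⟩ for k = 0,...,n−1, where ωₙ = e^{-2πi/n}. Then the Bargmann invariant Tr(ψ₀ψ₁⋯ψ_{n−1}) equals (sin²t + ω̄ₙ cos²t)ⁿ. -/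
open Real Complex

private lemma vmv_mul {u v u' v' : Fin 2 → ℂ} :
    Matrix.vecMulVec u v * Matrix.vecMulVec u' v' =
      (dotProduct v u') • Matrix.vecMulVec u v' := by
  ext i j
  simp [Matrix.mul_apply, Matrix.vecMulVec_apply, dotProduct, Fin.sum_univ_two]
  ring

private lemma vmv_trace (u v : Fin 2 → ℂ) :
    Matrix.trace (Matrix.vecMulVec u v) = dotProduct v u := by
  simp [Matrix.trace, Matrix.vecMulVec_apply, dotProduct, Fin.sum_univ_two, mul_comm]

theorem stmt_11 (n : ℕ) (hn : 3 ≤ n) (t : ℝ) (ht : t ∈ Set.Icc (0 : ℝ) 1) :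
    let ω : ℂ := Complex.exp (-(2 * π) * Complex.I / n)
    -- the pure-state vectors |ψₖ(t)⟩ = sin t |0⟩ + ω̄ⁿᵏ cos t |1⟩
    let ψ : ℕ → Fin 2 → ℂ := fun k => ![(Real.sin t : ℂ), (starRingEnd ℂ ω) ^ k * (Real.cos t : ℂ)]
    -- the rank-one projectors |ψₖ⟩⟨ψₖ|
    let P : ℕ → Matrix (Fin 2) (Fin 2) ℂ :=
      fun k => Matrix.vecMulVec (ψ k) (fun i => starRingEnd ℂ (ψ k i))
    Matrix.trace (((List.range n).map P).prod) =
      ((Real.sin t : ℂ) ^ 2 + starRingEnd ℂ ω * (Real.cos t : ℂ) ^ 2) ^ n := by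
  intro ω ψ P
  have hn0 : (n : ℂ) ≠ 0 := by exact_mod_cast (by omega : n ≠ 0)
  have hω : ω = Complex.exp (-(2 * π) * Complex.I / n) := rfl
  have hconj : starRingEnd ℂ ω = Complex.exp ((2*π)*Complex.I/n) := by
    rw [hω, ← Complex.exp_conj]
    congr 1
    simp [map_div₀, map_ofNat]
  have hωω : ω * starRingEnd ℂ ω = 1 := by
    rw [hconj, hω, ← Complex.exp_add]
    rw [show -(2 * ↑π) * Complex.I / ↑n + 2 * ↑π * Complex.I / ↑n = 0 by ring, Complex.exp_zero]
  have hpow : ω ^ n = 1 := by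
    rw [hω, ← Complex.exp_nat_mul]
    rw [show (n:ℂ) * (-(2 * ↑π) * Complex.I / ↑n) = -(2*↑π*Complex.I) by field_simp]
    rw [Complex.exp_neg, Complex.exp_two_pi_mul_I, inv_one]
  set c : ℂ := (Real.sin t : ℂ) ^ 2 + starRingEnd ℂ ω * (Real.cos t : ℂ) ^ 2 with hc
  have h1 : ∀ k : ℕ, ω ^ k * starRingEnd ℂ ω ^ k = 1 := fun k => by
    rw [← mul_pow, hωω, one_pow]
  have hdot : ∀ k : ℕ, dotProduct (fun i => starRingEnd ℂ (ψ k i)) (ψ (k+1)) = c := by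
    intro k
    simp only [ψ, dotProduct, Fin.sum_univ_two, Matrix.cons_val_zero,
      Matrix.cons_val_one, Matrix.head_cons, Complex.conj_ofReal, map_mul, map_pow,
      Complex.conj_conj, hc]
    linear_combination ((starRingEnd ℂ) ω * (Real.cos t : ℂ) ^ 2) * h1 k
  have key : ∀ m : ℕ, ((List.range (m+1)).map P).prod
      = c ^ m • Matrix.vecMulVec (ψ 0) (fun i => starRingEnd ℂ (ψ m i)) := by
    intro m
    induction m with
    | zero => rw [show List.range 1 = [0] from rfl]; simp [P]
    | succ m ih =>
      rw [List.range_succ, List.map_append, List.prod_append, ih]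
      simp only [List.map_cons, List.map_nil, List.prod_cons, List.prod_nil, mul_one]
      rw [Matrix.smul_mul, show P (m+1) = Matrix.vecMulVec (ψ (m+1))
        (fun i => starRingEnd ℂ (ψ (m+1) i)) from rfl, vmv_mul, hdot, smul_smul, pow_succ]
  obtain ⟨m, rfl⟩ : ∃ m, n = m + 1 := ⟨n - 1, by omega⟩
  rw [key, Matrix.trace_smul, vmv_trace, smul_eq_mul]
  have hlast : dotProduct (fun i => starRingEnd ℂ (ψ m i)) (ψ 0) = c := by
    simp only [ψ, dotProduct, Fin.sum_univ_two, Matrix.cons_val_zero,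
      Matrix.cons_val_one, Matrix.head_cons, Complex.conj_ofReal, map_mul, map_pow,
      Complex.conj_conj, pow_zero, one_mul, hc]
    have h2 : ω ^ m = starRingEnd ℂ ω := by
      have : ω ^ m * (ω * starRingEnd ℂ ω) = ω ^ (m+1) * starRingEnd ℂ ω := by ring
      rw [hωω, hpow, mul_one, one_mul] at this
      rw [this]
    rw [h2]
    ring
  rw [hlast, pow_succ]
end

section
/- For n ≥ 3 and t ∈ [0,1], the complex number Δₙ = (sin²t + e^{2πi/n} cos²t)ⁿ has modulus cosⁿ(π/n)·secⁿ((θ−π)/n), where θ is the argument of Δₙ determined by tan(θ/n) = sin(2π/n)/(cos(2π/n) + tan²t). In particular, every point of the curve r(θ) = cosⁿ(π/n) secⁿ((θ−π)/n) with cos²t = sin(θ/n)/(2 sin(π/n) cos((θ−π)/n)) ∈ [0,1] is realized. -/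
/-!
With `a = π / n` and `φ = θ / n` one has `e^{2ia} - 1 = 2i sin a · e^{ia}`, so the base of `Δ` is
`1 + 2i sin a cos²t · e^{ia}`. The hypothesis on `cos²t` says `2 sin a cos(φ - a) cos²t = sin φ`,
and with it `cos(φ - a)` times the base is `cos(φ - a) - sin a sin φ + i cos a sin φ = cos a · e^{iφ}`.
Hence `Δ = (cos a / cos(φ - a))ⁿ e^{iθ}`, and for `n ≥ 3`, `θ ∈ [0, 2π]` both cosines are positive,
so this real factor is the modulus.
-/

open Real Complex

theorem Real.cos_div_pos_of_abs_le_pi {x r : ℝ} (hx : |x| ≤ π) (hr : 2 < r) :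
    0 < Real.cos (x / r) := by
  have hr0 : 0 < r := by linarith
  apply Real.cos_pos_of_mem_Ioo
  rw [Set.mem_Ioo, ← abs_lt, abs_div, abs_of_pos hr0, div_lt_iff₀ hr0]
  nlinarith [pi_pos]

theorem sin_sq_add_exp_two_mul_I_mul_cos_sq {a φ t : ℝ} (hφ : Real.cos (φ - a) ≠ 0)
    (ht : 2 * Real.sin a * Real.cos (φ - a) * Real.cos t ^ 2 = Real.sin φ) :
    (Real.sin t : ℂ) ^ 2 + Complex.exp (2 * a * I) * (Real.cos t : ℂ) ^ 2 =
      ((Real.cos a / Real.cos (φ - a) : ℝ) : ℂ) * Complex.exp (φ * I) := by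
  have hφC : Complex.cos (φ - a) ≠ 0 := by exact_mod_cast hφ
  have htC : 2 * Complex.sin a * Complex.cos (φ - a) * Complex.cos t ^ 2 = Complex.sin φ := by
    exact_mod_cast ht
  rw [Complex.exp_mul_I, Complex.exp_mul_I]
  push_cast
  field_simp
  rw [Complex.cos_two_mul, Complex.sin_two_mul]
  linear_combination (I * Complex.cos a - Complex.sin a) * htC
    + 2 * Complex.cos t ^ 2 * Complex.cos (φ - a) * Complex.sin_sq_add_cos_sq (a : ℂ)
    + Complex.cos (φ - a) * Complex.sin_sq_add_cos_sq (t : ℂ) + Complex.cos_sub φ a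

theorem ofReal_mul_exp_div_mul_I_pow (ρ θ : ℝ) {n : ℕ} (hn : n ≠ 0) :
    ((ρ : ℂ) * Complex.exp (↑(θ / n) * I)) ^ n = ↑(ρ ^ n) * Complex.exp (θ * I) := by
  rw [mul_pow, ← Complex.exp_nat_mul, Complex.ofReal_pow]
  congr 2
  push_cast
  field_simp

theorem stmt_12_general (n : ℕ) (hn : 3 ≤ n) (t : ℝ)
    (θ : ℝ) (hθ : θ ∈ Set.Icc 0 (2 * π))
    (hcos : Real.cos t ^ 2 =
      Real.sin (θ / n) / (2 * Real.sin (π / n) * Real.cos ((θ - π) / n))) :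
    let Δ : ℂ := ((Real.sin t : ℂ) ^ 2 +
      Complex.exp (2 * π * Complex.I / n) * (Real.cos t : ℂ) ^ 2) ^ n
    ‖Δ‖ = Real.cos (π / n) ^ n * ((Real.cos ((θ - π) / n))⁻¹) ^ n ∧
      Δ = ((Real.cos (π / n) ^ n * ((Real.cos ((θ - π) / n))⁻¹) ^ n : ℝ) : ℂ) *
        Complex.exp (θ * Complex.I) := by
  intro Δ
  have hn2 : (2 : ℝ) < n := by exact_mod_cast hn
  have hπn : 0 < Real.cos (π / n) := Real.cos_div_pos_of_abs_le_pi (abs_of_pos pi_pos).le hn2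
  have hθn : 0 < Real.cos ((θ - π) / n) :=
    Real.cos_div_pos_of_abs_le_pi (abs_le.2 ⟨by linarith [hθ.1], by linarith [hθ.2]⟩) hn2
  have hsin : 0 < Real.sin (π / n) :=
    Real.sin_pos_of_pos_of_lt_pi (by positivity) (div_lt_self pi_pos (by linarith))
  have hbase : (Real.sin t : ℂ) ^ 2 + Complex.exp (2 * π * I / n) * (Real.cos t : ℂ) ^ 2 =
      ↑(Real.cos (π / n) / Real.cos ((θ - π) / n)) * Complex.exp (↑(θ / n) * I) := by
    rw [show 2 * π * I / n = 2 * ↑(π / n) * I by push_cast; ring, sub_div]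
    refine sin_sq_add_exp_two_mul_I_mul_cos_sq (sub_div θ π n ▸ hθn.ne') ?_
    rw [← sub_div, hcos]
    field_simp
  have hΔ : Δ = ↑((Real.cos (π / n) / Real.cos ((θ - π) / n)) ^ n) * Complex.exp (θ * I) := by
    rw [← ofReal_mul_exp_div_mul_I_pow _ θ (by omega), ← hbase]
  rw [div_eq_mul_inv (Real.cos (π / n)), mul_pow] at hΔ
  refine ⟨?_, hΔ⟩
  rw [hΔ, norm_mul, Complex.norm_real, Complex.norm_exp_ofReal_mul_I, mul_one, Real.norm_eq_abs,
    abs_of_pos (by positivity)]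

theorem stmt_12 (n : ℕ) (hn : 3 ≤ n) (t : ℝ) (ht : t ∈ Set.Icc (0 : ℝ) 1)
    (θ : ℝ) (hθ : θ ∈ Set.Icc 0 (2 * π))
    (hcos : Real.cos t ^ 2 =
      Real.sin (θ / n) / (2 * Real.sin (π / n) * Real.cos ((θ - π) / n))) :
    let Δ : ℂ := ((Real.sin t : ℂ) ^ 2 +
      Complex.exp (2 * π * Complex.I / n) * (Real.cos t : ℂ) ^ 2) ^ n
    ‖Δ‖ = Real.cos (π / n) ^ n * ((Real.cos ((θ - π) / n))⁻¹) ^ n ∧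
      Δ = ((Real.cos (π / n) ^ n * ((Real.cos ((θ - π) / n))⁻¹) ^ n : ℝ) : ℂ) *
        Complex.exp (θ * Complex.I) :=
  stmt_12_general n hn t θ hθ hcos
end

section
/- For each integer n ≥ 4, the curve given in polar coordinates by r(θ) = cosⁿ(π/n) secⁿ((θ−π)/n) for θ ∈ (0,π) is concave: writing x(θ) = r(θ)cos θ and y(θ) = r(θ)sin θ, the second derivative d²y/dx² equals −((n−1)/n) secⁿ(π/n) cos^{n+1}((θ−π)/n) csc³((π+(n−1)θ)/n), which is negative on (0,π). -/
/-!
For a polar curve `x = r cos θ`, `y = r sin θ` one has `x'y'' - y'x'' = r² + 2r'² - r r''` and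
`x' = r' cos θ - r sin θ`. For `r = c secⁿ u` with `u = (θ - a)/n` the chain rule gives `r' = r tan u`
and `r'' = r (tan² u + sec² u / n)`, so the numerator is `((n - 1)/n) r² sec² u`, while
`x' = -r sec u sin (θ - u)`. For `a = π`, `n ≥ 4` and `θ ∈ (0, π)` every factor of the resulting
closed form is positive.
-/

open Real Filter Topology

/-- `d²y/dx²` along the polar curve `θ ↦ (r θ cos θ, r θ sin θ)`, by the parametric formula. -/
noncomputable def polarSecondDeriv (r : ℝ → ℝ) (θ : ℝ) : ℝ :=
  (deriv (fun s => r s * cos s) θ * deriv (deriv fun s => r s * sin s) θ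
    - deriv (fun s => r s * sin s) θ * deriv (deriv fun s => r s * cos s) θ)
    / deriv (fun s => r s * cos s) θ ^ 3

section PolarCurve

variable {r r' : ℝ → ℝ} {r'' θ : ℝ}

theorem deriv_mul_cos_eventuallyEq (hr : ∀ᶠ s in 𝓝 θ, HasDerivAt r (r' s) s) :
    deriv (fun s => r s * cos s) =ᶠ[𝓝 θ] fun s => r' s * cos s - r s * sin s :=
  hr.mono fun s hs => ((hs.mul (hasDerivAt_cos s)).congr_deriv (by ring)).deriv

theorem deriv_mul_sin_eventuallyEq (hr : ∀ᶠ s in 𝓝 θ, HasDerivAt r (r' s) s) :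
    deriv (fun s => r s * sin s) =ᶠ[𝓝 θ] fun s => r' s * sin s + r s * cos s :=
  hr.mono fun s hs => (hs.mul (hasDerivAt_sin s)).deriv

theorem deriv_deriv_mul_cos (hr : ∀ᶠ s in 𝓝 θ, HasDerivAt r (r' s) s)
    (hr' : HasDerivAt r' r'' θ) :
    deriv (deriv fun s => r s * cos s) θ = r'' * cos θ - 2 * r' θ * sin θ - r θ * cos θ := by
  rw [(deriv_mul_cos_eventuallyEq hr).deriv_eq]
  exact ((hr'.mul (hasDerivAt_cos θ)).sub (hr.self_of_nhds.mul (hasDerivAt_sin θ))).deriv.trans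
    (by ring)

theorem deriv_deriv_mul_sin (hr : ∀ᶠ s in 𝓝 θ, HasDerivAt r (r' s) s)
    (hr' : HasDerivAt r' r'' θ) :
    deriv (deriv fun s => r s * sin s) θ = r'' * sin θ + 2 * r' θ * cos θ - r θ * sin θ := by
  rw [(deriv_mul_sin_eventuallyEq hr).deriv_eq]
  exact ((hr'.mul (hasDerivAt_sin θ)).add (hr.self_of_nhds.mul (hasDerivAt_cos θ))).deriv.trans
    (by ring)

theorem polarSecondDeriv_eq (hr : ∀ᶠ s in 𝓝 θ, HasDerivAt r (r' s) s)
    (hr' : HasDerivAt r' r'' θ) :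
    polarSecondDeriv r θ
      = (r θ ^ 2 + 2 * r' θ ^ 2 - r θ * r'') / (r' θ * cos θ - r θ * sin θ) ^ 3 := by
  rw [polarSecondDeriv, deriv_deriv_mul_cos hr hr', deriv_deriv_mul_sin hr hr',
    (deriv_mul_cos_eventuallyEq hr).self_of_nhds, (deriv_mul_sin_eventuallyEq hr).self_of_nhds]
  congr 1
  linear_combination (r θ ^ 2 + 2 * r' θ ^ 2 - r θ * r'') * sin_sq_add_cos_sq θ

end PolarCurve

section SecPow

variable {n : ℕ} {a c s : ℝ}

theorem hasDerivAt_const_mul_inv_cos_pow (hn : n ≠ 0) (hs : cos ((s - a) / n) ≠ 0) :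
    HasDerivAt (fun t => c * (cos ((t - a) / n))⁻¹ ^ n)
      (c * (cos ((s - a) / n))⁻¹ ^ n * tan ((s - a) / n)) s := by
  have hu : HasDerivAt (fun t => (t - a) / n) (1 / n) s := by
    simpa using ((hasDerivAt_id s).sub_const a).div_const (n : ℝ)
  refine (((hu.cos.inv hs).pow n).const_mul c).congr_deriv ?_
  simp only [Pi.inv_apply]
  rw [tan_eq_sin_div_cos, pow_sub₀ _ (inv_ne_zero hs) (Nat.one_le_iff_ne_zero.mpr hn)]
  field_simp

theorem hasDerivAt_const_mul_inv_cos_pow_mul_tan (hn : n ≠ 0) (hs : cos ((s - a) / n) ≠ 0) :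
    HasDerivAt (fun t => c * (cos ((t - a) / n))⁻¹ ^ n * tan ((t - a) / n))
      (c * (cos ((s - a) / n))⁻¹ ^ n
        * (tan ((s - a) / n) ^ 2 + 1 / (n * cos ((s - a) / n) ^ 2))) s := by
  have hu : HasDerivAt (fun t => (t - a) / n) (1 / n) s := by
    simpa using ((hasDerivAt_id s).sub_const a).div_const (n : ℝ)
  refine ((hasDerivAt_const_mul_inv_cos_pow hn hs).mul
    ((hasDerivAt_tan hs).comp s hu)).congr_deriv ?_
  simp only [Function.comp_apply]
  field_simp

theorem polarSecondDeriv_const_mul_inv_cos_pow {θ : ℝ} (hn : n ≠ 0) (hc : c ≠ 0)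
    (hu : cos ((θ - a) / n) ≠ 0) (hψ : sin (θ - (θ - a) / n) ≠ 0) :
    polarSecondDeriv (fun t => c * (cos ((t - a) / n))⁻¹ ^ n) θ
      = -((n - 1) / n) * c⁻¹ * cos ((θ - a) / n) ^ (n + 1) * (sin (θ - (θ - a) / n))⁻¹ ^ 3 := by
  have hr : ∀ᶠ s in 𝓝 θ, HasDerivAt (fun t => c * (cos ((t - a) / n))⁻¹ ^ n)
      (c * (cos ((s - a) / n))⁻¹ ^ n * tan ((s - a) / n)) s := by
    have hcont : ContinuousAt (fun s => cos ((s - a) / n)) θ := by fun_prop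
    exact (hcont.eventually_ne hu).mono fun s hs => hasDerivAt_const_mul_inv_cos_pow hn hs
  rw [polarSecondDeriv_eq hr (hasDerivAt_const_mul_inv_cos_pow_mul_tan hn hu)]
  set u := (θ - a) / n
  have hx' : c * (cos u)⁻¹ ^ n * tan u * cos θ - c * (cos u)⁻¹ ^ n * sin θ
      = -(c * (cos u)⁻¹ ^ n * sin (θ - u) / cos u) := by
    rw [tan_eq_sin_div_cos, sin_sub]
    field_simp
    ring
  rw [hx', tan_eq_sin_div_cos]
  simp only [inv_pow]
  field_simp
  linear_combination -(n * cos u * cos u ^ n) * sin_sq_add_cos_sq u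

end SecPow

theorem stmt_13 (n : ℕ) (hn : 4 ≤ n) (θ : ℝ) (hθ : θ ∈ Set.Ioo 0 π) :
    let x : ℝ → ℝ := fun s => Real.cos (π / n) ^ n * ((Real.cos ((s - π) / n))⁻¹) ^ n * Real.cos s
    let y : ℝ → ℝ := fun s => Real.cos (π / n) ^ n * ((Real.cos ((s - π) / n))⁻¹) ^ n * Real.sin s
    let d2 : ℝ :=
      (deriv x θ * deriv (deriv y) θ - deriv y θ * deriv (deriv x) θ) / (deriv x θ) ^ 3
    d2 = -(((n : ℝ) - 1) / n) * ((Real.cos (π / n))⁻¹) ^ n *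
          (Real.cos ((θ - π) / n)) ^ (n + 1) *
          ((Real.sin ((π + ((n : ℝ) - 1) * θ) / n))⁻¹) ^ 3 ∧
      d2 < 0 := by
  obtain ⟨hθ0, hθπ⟩ := hθ
  have hn4 : (4 : ℝ) ≤ n := by exact_mod_cast hn
  have hn0 : (0 : ℝ) < n := by linarith
  have hπn : 0 < cos (π / n) := cos_pos_of_mem_Ioo
    ⟨by linarith [div_pos pi_pos hn0], by rw [div_lt_div_iff₀ hn0 two_pos]; nlinarith [pi_pos]⟩
  have hu : 0 < cos ((θ - π) / n) := cos_pos_of_mem_Ioo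
    ⟨by rw [lt_div_iff₀ hn0]; nlinarith, by rw [div_lt_iff₀ hn0]; nlinarith⟩
  have hψ : 0 < sin ((π + (n - 1) * θ) / n) := sin_pos_of_pos_of_lt_pi
    (div_pos (by nlinarith) hn0) (by rw [div_lt_iff₀ hn0]; nlinarith)
  have hψeq : θ - (θ - π) / n = (π + (n - 1) * θ) / n := by field_simp; ring
  have hd2 : polarSecondDeriv (fun t => cos (π / n) ^ n * (cos ((t - π) / n))⁻¹ ^ n) θ
      = -(((n : ℝ) - 1) / n) * (cos (π / n))⁻¹ ^ n * cos ((θ - π) / n) ^ (n + 1)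
        * (sin ((π + (n - 1) * θ) / n))⁻¹ ^ 3 := by
    rw [polarSecondDeriv_const_mul_inv_cos_pow (by omega) (pow_pos hπn n).ne' hu.ne'
      (hψeq ▸ hψ.ne'), hψeq]
    simp only [inv_pow]
  refine ⟨hd2, ?_⟩
  change polarSecondDeriv _ θ < 0
  rw [hd2, neg_mul, neg_mul, neg_mul, neg_lt_zero]
  have hn1 : (0 : ℝ) < n - 1 := by linarith
  positivity
end

section
/- For each integer n ≥ 3, the closed region in the complex plane enclosed by the curve r(θ) = cosⁿ(π/n) secⁿ((θ−π)/n), θ ∈ [0,2π], is convex. -/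
/-!
Put `u = -z`. Since `-(r e^{iθ}) = r e^{i(θ - π)}`, the region becomes `powSectorRegion n`.
For `|a|, |b| ≤ π/n` one has `cos (n a - (n - 1) b) cosⁿ⁻¹ b ≤ cosⁿ a`, by weighted AM-GM and
concavity of `cos` on `[-π/2, π/2]`. Hence the region is the intersection of the half-planes
`re (u e^{-i(n-1)b}) cosⁿ⁻¹ b ≤ cosⁿ (π/n)`, `|b| ≤ π/n`: the one with `b = arg u / n` cuts off
any `u` outside it.
-/

open Real Complex

theorem mul_pow_pred_le_mean_pow {n : ℕ} (hn : 1 ≤ n) {x y : ℝ} (hx : 0 ≤ x) (hy : 0 ≤ y) :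
    x * y ^ (n - 1) ≤ ((x + (n - 1) * y) / n) ^ n := by
  have hn' : (1 : ℝ) ≤ n := by exact_mod_cast hn
  have hw : (0 : ℝ) ≤ (n - 1) / n := div_nonneg (by linarith) (by linarith)
  have amgm := geom_mean_le_arith_mean2_weighted (by positivity) hw hx hy
    (by field_simp; ring : 1 / (n : ℝ) + (n - 1) / n = 1)
  calc x * y ^ (n - 1) = (x ^ (1 / (n : ℝ)) * y ^ (((n : ℝ) - 1) / n)) ^ n := by
        rw [mul_pow, ← rpow_natCast (x ^ _), ← rpow_mul hx, ← rpow_natCast (y ^ _),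
          ← rpow_mul hy, ← rpow_natCast y (n - 1), Nat.cast_sub hn]
        field_simp
        simp
    _ ≤ (1 / n * x + (n - 1) / n * y) ^ n := pow_le_pow_left₀ (by positivity) amgm n
    _ = ((x + (n - 1) * y) / n) ^ n := by ring

theorem cos_mul_cos_pow_pred_le_cos_pow {n : ℕ} (hn : 1 ≤ n) {x y m : ℝ}
    (hx : x ∈ Set.Icc (-(π / 2)) (π / 2)) (hy : y ∈ Set.Icc (-(π / 2)) (π / 2))
    (hm : n * m = x + (n - 1) * y) :
    Real.cos x * Real.cos y ^ (n - 1) ≤ Real.cos m ^ n := by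
  have hn' : (1 : ℝ) ≤ n := by exact_mod_cast hn
  have hw : (0 : ℝ) ≤ (n - 1) / n := div_nonneg (by linarith) (by linarith)
  have hcx := cos_nonneg_of_mem_Icc hx
  have hcy := cos_nonneg_of_mem_Icc hy
  have concave := strictConcaveOn_cos_Icc.concaveOn.2 hx hy (by positivity) hw
    (by field_simp; ring : 1 / (n : ℝ) + (n - 1) / n = 1)
  have hmean : (1 / (n : ℝ)) • x + (((n : ℝ) - 1) / n) • y = m := by
    simp only [smul_eq_mul]
    field_simp
    linarith
  rw [hmean, smul_eq_mul, smul_eq_mul] at concave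
  calc Real.cos x * Real.cos y ^ (n - 1)
      ≤ ((Real.cos x + (n - 1) * Real.cos y) / n) ^ n := mul_pow_pred_le_mean_pow hn hcx hcy
    _ ≤ Real.cos m ^ n := by
        gcongr
        calc (Real.cos x + (n - 1) * Real.cos y) / n
            = 1 / n * Real.cos x + (n - 1) / n * Real.cos y := by ring
          _ ≤ Real.cos m := concave

theorem cos_sub_mul_cos_pow_pred_le_cos_pow {n : ℕ} (hn : 2 ≤ n) {a b : ℝ}
    (ha : |a| ≤ π / n) (hb : |b| ≤ π / n) :
    Real.cos (n * a - (n - 1) * b) * Real.cos b ^ (n - 1) ≤ Real.cos a ^ n := by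
  wlog hX : 0 ≤ n * a - (n - 1) * b generalizing a b
  · have := this (a := -a) (b := -b) (by rwa [abs_neg]) (by rwa [abs_neg]) (by linarith)
    rwa [Real.cos_neg, Real.cos_neg, show n * -a - (n - 1) * -b = -(n * a - (n - 1) * b) by ring,
      Real.cos_neg] at this
  have hn' : (2 : ℝ) ≤ n := by exact_mod_cast hn
  have hπn : π / n ≤ π / 2 := div_le_div_of_nonneg_left pi_pos.le two_pos hn'
  have hna : |a| * n ≤ π := (le_div_iff₀ (by positivity)).1 ha
  have hnb : |b| * n ≤ π := (le_div_iff₀ (by positivity)).1 hb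
  obtain ⟨ha₁, ha₂⟩ := abs_le.1 ha
  obtain ⟨hb₁, hb₂⟩ := abs_le.1 hb
  have hy : b ∈ Set.Icc (-(π / 2)) (π / 2) := ⟨by linarith, by linarith⟩
  rcases le_or_gt (n * a - (n - 1) * b) (π / 2) with hX₁ | hX₁
  · exact cos_mul_cos_pow_pred_le_cos_pow (by omega) ⟨by linarith, hX₁⟩ hy (by ring)
  rcases le_or_gt (n * a - (n - 1) * b) (π + π / 2) with hX₂ | hX₂
  · have hcos := cos_nonpos_of_pi_div_two_le_of_le hX₁.le hX₂
    have : 0 ≤ Real.cos b ^ (n - 1) := pow_nonneg (cos_nonneg_of_mem_Icc hy) _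
    have : 0 ≤ Real.cos a ^ n := pow_nonneg (cos_nonneg_of_mem_Icc ⟨by linarith, by linarith⟩) _
    nlinarith
  have hX₃ : n * a - (n - 1) * b ≤ 2 * π := by
    nlinarith [le_abs_self a, neg_abs_le b, abs_nonneg b]
  -- Past `3π/2`, shift by a full turn: `a - 2π/n` then plays the role of `a`.
  have hm : n * (a - 2 * π / n) = (n * a - (n - 1) * b - 2 * π) + (n - 1) * b := by
    field_simp
    ring
  have hm₁ : a - 2 * π / n ≤ -|a| := by
    have : 2 * π / n = π / n + π / n := by ring
    rcases abs_cases a with h | h <;> linarith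
  have hm₂ : -(π / 2) ≤ a - 2 * π / n := by
    have : 2 * π / n * n = 2 * π := by field_simp
    nlinarith [le_abs_self b, neg_abs_le b]
  calc Real.cos (n * a - (n - 1) * b) * Real.cos b ^ (n - 1)
      = Real.cos (n * a - (n - 1) * b - 2 * π) * Real.cos b ^ (n - 1) := by rw [Real.cos_sub_two_pi]
    _ ≤ Real.cos (a - 2 * π / n) ^ n :=
        cos_mul_cos_pow_pred_le_cos_pow (by omega) ⟨by linarith, by linarith⟩ hy hm
    _ ≤ Real.cos a ^ n := by
        gcongr
        · exact cos_nonneg_of_mem_Icc ⟨hm₂, by linarith [abs_nonneg a]⟩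
        · rw [← Real.cos_abs a, ← Real.cos_neg (a - 2 * π / n)]
          exact cos_le_cos_of_nonneg_of_le_pi (abs_nonneg a) (by linarith) (by linarith)

theorem Complex.re_mul_exp_neg_mul_I (u : ℂ) (β : ℝ) :
    (u * exp (-(β * I))).re = ‖u‖ * Real.cos (arg u - β) := by
  conv_lhs => rw [← norm_mul_exp_arg_mul_I u]
  rw [mul_assoc, ← Complex.exp_add, ← sub_eq_add_neg, ← sub_mul, ← ofReal_sub, re_ofReal_mul,
    exp_ofReal_mul_I_re]

theorem Complex.abs_arg_ofReal_mul_exp_mul_I {r φ : ℝ} (hr : 0 < r) (hφ : φ ∈ Set.Icc (-π) π) :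
    |arg (r * exp (φ * I))| = |φ| := by
  rw [arg_real_mul _ hr]
  rcases hφ.1.eq_or_lt with h | h
  · rw [← h, ofReal_neg, neg_mul, exp_neg, exp_pi_mul_I, inv_neg, inv_one, arg_neg_one, abs_neg]
  · rw [arg_exp_mul_I, toIocMod_eq_self _ |>.2 ⟨h, by linarith [hφ.2]⟩]

theorem Complex.exists_eq_norm_mul_exp_mul_I_of_mem_Ico (z : ℂ) :
    ∃ θ ∈ Set.Ico 0 (2 * π), z = ‖z‖ * exp (θ * I) := by
  refine ⟨toIcoMod two_pi_pos 0 (arg z), toIcoMod_mem_Ico' _ _, ?_⟩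
  rw [toIcoMod, ofReal_sub, ofReal_zsmul, ofReal_mul, ofReal_ofNat,
    exp_mul_I_periodic.sub_zsmul_eq, norm_mul_exp_arg_mul_I]

/-- With `w = ‖u‖^{1/n} e^{i arg u / n}` the principal `n`-th root of `u`, the condition reads
`re w ≤ cos (π / n)`: this is the image of the triangle `{|arg w| ≤ π/n, re w ≤ cos (π/n)}`
under `w ↦ wⁿ`. -/
def powSectorRegion (n : ℕ) : Set ℂ :=
  {u | ‖u‖ * Real.cos (arg u / n) ^ n ≤ Real.cos (π / n) ^ n}

theorem powSectorRegion_eq_iInter_halfPlanes {n : ℕ} (hn : 2 ≤ n) :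
    powSectorRegion n = ⋂ b ∈ Set.Icc (-(π / n)) (π / n),
      {u | (u * exp (-(((n - 1) * b : ℝ) * I))).re * Real.cos b ^ (n - 1) ≤
        Real.cos (π / n) ^ n} := by
  have hn₀ : (n : ℝ) ≠ 0 := by positivity
  have harg : ∀ u : ℂ, |arg u / n| ≤ π / n := fun u => by
    rw [abs_div, Nat.abs_cast]
    exact div_le_div_of_nonneg_right (abs_arg_le_pi u) (Nat.cast_nonneg n)
  ext u
  simp only [powSectorRegion, Set.mem_ofPred_eq, Set.mem_iInter, re_mul_exp_neg_mul_I]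
  constructor
  · intro hu b hb
    have key := cos_sub_mul_cos_pow_pred_le_cos_pow hn (harg u) (abs_le.2 hb)
    rw [mul_div_cancel₀ _ hn₀] at key
    calc ‖u‖ * Real.cos (arg u - (n - 1) * b) * Real.cos b ^ (n - 1)
        = ‖u‖ * (Real.cos (arg u - (n - 1) * b) * Real.cos b ^ (n - 1)) := by ring
      _ ≤ ‖u‖ * Real.cos (arg u / n) ^ n := by gcongr
      _ ≤ _ := hu
  · intro hu
    have := hu (arg u / n) (abs_le.1 (harg u))
    rwa [show arg u - (n - 1) * (arg u / n) = arg u / n by field_simp; ring, mul_assoc,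
      ← pow_succ', Nat.sub_add_cancel (by omega)] at this

theorem convex_powSectorRegion {n : ℕ} (hn : 2 ≤ n) : Convex ℝ (powSectorRegion n) := by
  rw [powSectorRegion_eq_iInter_halfPlanes hn]
  refine convex_iInter₂ fun b _ => convex_halfSpace_le ⟨fun u v => ?_, fun r u => ?_⟩ _
  · simp only [add_mul, add_re]
  · simp only [smul_eq_mul, re_ofReal_mul, mul_assoc, real_smul]

theorem neg_polar_mem_powSectorRegion_iff {n : ℕ} (hn : 3 ≤ n) {r θ : ℝ} (hr : 0 ≤ r)
    (hθ : θ ∈ Set.Ico 0 (2 * π)) :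
    -(r * exp (θ * I)) ∈ powSectorRegion n ↔
      r ≤ Real.cos (π / n) ^ n * ((Real.cos ((θ - π) / n))⁻¹) ^ n := by
  have hφ : θ - π ∈ Set.Icc (-π) π := ⟨by linarith [hθ.1], by linarith [hθ.2]⟩
  have hcos : ∀ x : ℝ, Real.cos (x / n) = Real.cos (|x| / n) := fun x => by
    rw [← Real.cos_abs (x / n), abs_div, Nat.abs_cast]
  have hpos : 0 < Real.cos ((θ - π) / n) := by
    have hn' : (3 : ℝ) ≤ n := by exact_mod_cast hn
    apply cos_pos_of_mem_Ioo
    rw [Set.mem_Ioo, ← abs_lt, abs_div, Nat.abs_cast, div_lt_iff₀ (by positivity)]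
    nlinarith [abs_le.2 hφ, pi_pos]
  have hneg : -(r * exp (θ * I)) = r * exp ((θ - π : ℝ) * I) := by
    rw [ofReal_sub, sub_mul, Complex.exp_sub, exp_pi_mul_I, div_neg, div_one, mul_neg]
  have key : ‖-(r * exp (θ * I))‖ * Real.cos (arg (-(r * exp (θ * I))) / n) ^ n
      = r * Real.cos ((θ - π) / n) ^ n := by
    rcases hr.eq_or_lt with rfl | hr
    · simp
    rw [hneg, norm_mul, norm_exp_ofReal_mul_I, norm_real, Real.norm_of_nonneg hr.le, mul_one,
      hcos, abs_arg_ofReal_mul_exp_mul_I hr hφ, ← hcos]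
  rw [powSectorRegion, Set.mem_ofPred_eq, key, inv_pow, le_mul_inv_iff₀ (pow_pos hpos n)]

theorem stmt_14 (n : ℕ) (hn : 3 ≤ n) :
    Convex ℝ {z : ℂ | ∃ r θ : ℝ, 0 ≤ r ∧
      r ≤ Real.cos (π / n) ^ n * ((Real.cos ((θ - π) / n))⁻¹) ^ n ∧
      θ ∈ Set.Ico 0 (2 * π) ∧ z = (r : ℂ) * Complex.exp (θ * Complex.I)} := by
  have hregion : {z : ℂ | ∃ r θ : ℝ, 0 ≤ r ∧
      r ≤ Real.cos (π / n) ^ n * ((Real.cos ((θ - π) / n))⁻¹) ^ n ∧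
      θ ∈ Set.Ico 0 (2 * π) ∧ z = (r : ℂ) * Complex.exp (θ * Complex.I)} =
      -powSectorRegion n := by
    ext z
    rw [Set.mem_neg]
    constructor
    · rintro ⟨r, θ, hr, hle, hθ, rfl⟩
      exact (neg_polar_mem_powSectorRegion_iff hn hr hθ).2 hle
    · intro hz
      obtain ⟨θ, hθ, hzθ⟩ := exists_eq_norm_mul_exp_mul_I_of_mem_Ico z
      rw [hzθ] at hz
      exact ⟨‖z‖, θ, norm_nonneg z,
        (neg_polar_mem_powSectorRegion_iff hn (norm_nonneg z) hθ).1 hz, hθ, hzθ⟩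
  rw [hregion]
  exact (convex_powSectorRegion (by omega)).neg
end

section
/- For n ≥ 3, let fₙ(θ) = secⁿ((θ−π)/n) sin θ on [0,π]. Then fₙ attains its maximum at θ* = ((n−2)/(n−1))·(π/2), and max fₙ = sec^{n−1}(π/(2(n−1))); consequently τₙ := cosⁿ(π/n)·max_{θ∈[0,π]} fₙ(θ) = cosⁿ(π/n) sec^{n−1}(π/(2(n−1))). -/
/-!
With `u = (θ - π) / n`, the chain rule gives
`f' θ = sec^(n+1) u * (sin u * sin θ + cos u * cos θ) = sec^(n+1) u * cos (θ - u)`.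
On `[0, π]` we have `sec u > 0` as soon as `n ≥ 3`, and `θ - u` is an increasing affine function
of `θ` running through `[π / n, π]` that equals `π / 2` exactly at `θ* = (n - 2) / (n - 1) * π / 2`.
Hence `f` increases up to `θ*` and decreases after it. At `θ*` we have `u = -π / (2 (n - 1))` and
`θ* = π / 2 + u`, so `sin θ* = cos u` and one factor of `sec^n u` cancels.
-/

open Real Set

noncomputable def secPowSin (n : ℕ) (θ : ℝ) : ℝ := (cos ((θ - π) / n))⁻¹ ^ n * sin θ

namespace secPowSin

variable {n : ℕ}

lemma cos_sub_pi_div_pos (hn : 3 ≤ n) {θ : ℝ} (hθ : θ ∈ Icc 0 π) : 0 < cos ((θ - π) / n) := by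
  have hn' : (3 : ℝ) ≤ n := by exact_mod_cast hn
  apply cos_pos_of_mem_Ioo
  constructor
  · rw [lt_div_iff₀ (by linarith)]; nlinarith [hθ.1, pi_pos]
  · rw [div_lt_iff₀ (by linarith)]; nlinarith [hθ.2, pi_pos]

lemma hasDerivAt (hn : n ≠ 0) {θ : ℝ} (hθ : cos ((θ - π) / n) ≠ 0) :
    HasDerivAt (secPowSin n) ((cos ((θ - π) / n))⁻¹ ^ (n + 1) * cos (θ - (θ - π) / n)) θ := by
  have hu : HasDerivAt (fun θ : ℝ => (θ - π) / n) (1 / n) θ := by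
    simpa using ((hasDerivAt_id θ).sub_const π).div_const (n : ℝ)
  have hsec := (((hasDerivAt_cos _).comp θ hu).inv hθ).pow n
  refine (hsec.mul (hasDerivAt_sin θ)).congr_deriv ?_
  obtain ⟨m, rfl⟩ := Nat.exists_eq_succ_of_ne_zero hn
  simp only [Function.comp_apply, Pi.inv_apply, Pi.pow_apply, cos_sub, Nat.succ_sub_one, inv_pow,
    pow_succ]
  field_simp
  ring

lemma continuousAt (hn : 3 ≤ n) {θ : ℝ} (hθ : θ ∈ Icc 0 π) : ContinuousAt (secPowSin n) θ :=
  (hasDerivAt (by omega) (cos_sub_pi_div_pos hn hθ).ne').continuousAt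

lemma sub_sub_div_mem_Icc (hn : n ≠ 0) {θ : ℝ} (hθ : θ ∈ Icc 0 π) :
    θ - (θ - π) / n ∈ Icc θ π := by
  have hn' : (1 : ℝ) ≤ n := by exact_mod_cast Nat.one_le_iff_ne_zero.2 hn
  have hu : θ - π ≤ (θ - π) / n := by rw [le_div_iff₀ (by linarith)]; nlinarith [hθ.2]
  have hu' : (θ - π) / n ≤ 0 := div_nonpos_of_nonpos_of_nonneg (by linarith [hθ.2]) (by linarith)
  constructor <;> linarith

noncomputable def argmax (n : ℕ) : ℝ := ((n : ℝ) - 2) / ((n : ℝ) - 1) * (π / 2)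

lemma argmax_mem_Icc (hn : 2 ≤ n) : argmax n ∈ Icc 0 π := by
  have hn' : (2 : ℝ) ≤ n := by exact_mod_cast hn
  have hratio : ((n : ℝ) - 2) / ((n : ℝ) - 1) ∈ Icc 0 1 :=
    ⟨div_nonneg (by linarith) (by linarith), (div_le_one (by linarith)).2 (by linarith)⟩
  have hpi : 0 ≤ π / 2 := by positivity
  exact ⟨mul_nonneg hratio.1 hpi, (mul_le_of_le_one_left hpi hratio.2).trans (by linarith)⟩

lemma sub_sub_div_eq (hn : 2 ≤ n) (θ : ℝ) :
    θ - (θ - π) / n = π / 2 + ((n : ℝ) - 1) / n * (θ - argmax n) := by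
  have hn' : (2 : ℝ) ≤ n := by exact_mod_cast hn
  have h1 : (n : ℝ) - 1 ≠ 0 := by linarith
  have h0 : (n : ℝ) ≠ 0 := by linarith
  unfold argmax
  field_simp
  ring

theorem isMaxOn_argmax (hn : 3 ≤ n) : IsMaxOn (secPowSin n) (Icc 0 π) (argmax n) := by
  have hn0 : n ≠ 0 := by omega
  have hn' : (3 : ℝ) ≤ n := by exact_mod_cast hn
  have hslope : 0 ≤ ((n : ℝ) - 1) / n := div_nonneg (by linarith) (by linarith)
  have hmax := argmax_mem_Icc (n := n) (by omega)
  have hderiv : ∀ θ ∈ Icc 0 π,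
      deriv (secPowSin n) θ = (cos ((θ - π) / n))⁻¹ ^ (n + 1) * cos (θ - (θ - π) / n) :=
    fun θ hθ => (hasDerivAt hn0 (cos_sub_pi_div_pos hn hθ).ne').deriv
  have hdiff : ∀ θ ∈ Icc 0 π, DifferentiableWithinAt ℝ (secPowSin n) (Ioo 0 π) θ :=
    fun θ hθ => (hasDerivAt hn0 (cos_sub_pi_div_pos hn hθ).ne').differentiableAt.differentiableWithinAt
  have hleft : Ioo 0 (argmax n) ⊆ Icc 0 π := fun x hx => ⟨hx.1.le, hx.2.le.trans hmax.2⟩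
  have hright : Ioo (argmax n) π ⊆ Icc 0 π := fun x hx => ⟨hmax.1.trans hx.1.le, hx.2.le⟩
  refine isMaxOn_Icc_of_deriv (continuousAt hn ⟨le_rfl, pi_pos.le⟩) (continuousAt hn hmax)
    (continuousAt hn ⟨pi_pos.le, le_rfl⟩) (fun x hx => ?_) (fun x hx => ?_) (fun x hx => ?_)
    (fun x hx => ?_)
  · exact (hdiff x (hleft hx)).mono (Ioo_subset_Ioo_right hmax.2)
  · exact (hdiff x (hright hx)).mono (Ioo_subset_Ioo_left hmax.1)
  · have hsec := pow_nonneg (inv_nonneg.2 (cos_sub_pi_div_pos hn (hleft hx)).le) (n + 1)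
    have harg := sub_sub_div_mem_Icc hn0 (hleft hx)
    rw [hderiv x (hleft hx)]
    refine mul_nonneg hsec (cos_nonneg_of_mem_Icc ⟨by linarith [hx.1, pi_pos, harg.1], ?_⟩)
    rw [sub_sub_div_eq (by omega)]
    nlinarith [hx.2]
  · have hsec := pow_nonneg (inv_nonneg.2 (cos_sub_pi_div_pos hn (hright hx)).le) (n + 1)
    have harg := sub_sub_div_mem_Icc hn0 (hright hx)
    rw [hderiv x (hright hx)]
    refine mul_nonpos_of_nonneg_of_nonpos hsec (cos_nonpos_of_pi_div_two_le_of_le ?_ ?_)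
    · rw [sub_sub_div_eq (by omega)]
      nlinarith [hx.1]
    · linarith [harg.2, pi_pos]

lemma argmax_eq (hn : 2 ≤ n) : argmax n = π / 2 - π / (2 * ((n : ℝ) - 1)) := by
  have h1 : (n : ℝ) - 1 ≠ 0 := by
    have hn' : (2 : ℝ) ≤ n := by exact_mod_cast hn
    linarith
  unfold argmax
  field_simp
  ring

lemma argmax_sub_pi_div (hn : 2 ≤ n) : (argmax n - π) / n = -(π / (2 * ((n : ℝ) - 1))) := by
  have hn' : (2 : ℝ) ≤ n := by exact_mod_cast hn
  have h1 : (n : ℝ) - 1 ≠ 0 := by linarith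
  rw [argmax_eq hn]
  field_simp
  ring

lemma sin_argmax (hn : 2 ≤ n) : sin (argmax n) = cos (π / (2 * ((n : ℝ) - 1))) := by
  rw [argmax_eq hn, sin_pi_div_two_sub]

theorem apply_argmax (hn : 3 ≤ n) :
    secPowSin n (argmax n) = (cos (π / (2 * ((n : ℝ) - 1))))⁻¹ ^ (n - 1) := by
  have hcos := cos_sub_pi_div_pos hn (argmax_mem_Icc (n := n) (by omega))
  rw [argmax_sub_pi_div (n := n) (by omega), cos_neg] at hcos
  obtain ⟨m, rfl⟩ : ∃ m, n = m + 1 := ⟨n - 1, by omega⟩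
  rw [secPowSin, argmax_sub_pi_div (by omega), cos_neg, sin_argmax (by omega), pow_succ, mul_assoc,
    inv_mul_cancel₀ hcos.ne', mul_one, Nat.add_sub_cancel]

end secPowSin

theorem stmt_15 (n : ℕ) (hn : 3 ≤ n) :
    let f : ℝ → ℝ := fun θ => ((Real.cos ((θ - π) / n))⁻¹) ^ n * Real.sin θ
    let θstar : ℝ := (((n : ℝ) - 2) / ((n : ℝ) - 1)) * (π / 2)
    θstar ∈ Set.Icc 0 π ∧
      IsMaxOn f (Set.Icc 0 π) θstar ∧
      f θstar = ((Real.cos (π / (2 * ((n : ℝ) - 1))))⁻¹) ^ (n - 1) ∧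
      Real.cos (π / n) ^ n * f θstar =
        Real.cos (π / n) ^ n * ((Real.cos (π / (2 * ((n : ℝ) - 1))))⁻¹) ^ (n - 1) := by
  have hvalue := secPowSin.apply_argmax hn
  exact ⟨secPowSin.argmax_mem_Icc (by omega), secPowSin.isMaxOn_argmax hn, hvalue,
    congrArg _ hvalue⟩
end

section
/- The region enclosed by the curve r(θ) = cosⁿ(π/n) secⁿ((θ−π)/n) (θ ∈ [0,2π]) is contained in the rectangle [−cosⁿ(π/n), 1] × [−τₙ, τₙ], where τₙ = cosⁿ(π/n) sec^{n−1}(π/(2(n−1))). -/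
/-!
Writing θ = π + nφ with |φ| ≤ π/n, the point is z = -r e^{inφ} with r cos^n φ ≤ cos^n(π/n).
Both bounds come from `cos x ^ m * cos y ≤ cos ((m x + y)/(m + 1)) ^ (m + 1)` on [-π/2, π/2]
(AM-GM, then concavity of cos): with x = 0 it gives cos(nφ) ≤ cos^n φ, and with
x = π/(2(n-1)), y = n|φ| - π/2 (so that (n-1)x = π/2) it gives
cos^{n-1}(π/(2(n-1))) |sin(nφ)| ≤ cos^n φ.
-/

open Real Set

theorem pow_mul_le_mean_pow {a b : ℝ} (ha : 0 ≤ a) (hb : 0 ≤ b) (m : ℕ) :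
    a ^ m * b ≤ ((m * a + b) / (m + 1)) ^ (m + 1) := by
  have hm : (0 : ℝ) < m + 1 := by positivity
  have amgm := geom_mean_le_arith_mean2_weighted (w₁ := m / (m + 1)) (w₂ := 1 / (m + 1))
    (by positivity) (by positivity) ha hb (by field_simp)
  calc a ^ m * b = (a ^ (m / (m + 1) : ℝ) * b ^ (1 / (m + 1) : ℝ)) ^ (m + 1) := by
        rw [mul_pow, ← rpow_mul_natCast ha, ← rpow_mul_natCast hb]
        push_cast
        rw [div_mul_cancel₀ _ hm.ne', div_mul_cancel₀ _ hm.ne', rpow_natCast, rpow_one]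
    _ ≤ (m / (m + 1) * a + 1 / (m + 1) * b) ^ (m + 1) := by gcongr
    _ = ((m * a + b) / (m + 1)) ^ (m + 1) := by ring

theorem cos_pow_mul_cos_le_cos_mean_pow {x y : ℝ} (hx : x ∈ Icc (-(π / 2)) (π / 2))
    (hy : y ∈ Icc (-(π / 2)) (π / 2)) (m : ℕ) :
    cos x ^ m * cos y ≤ cos ((m * x + y) / (m + 1)) ^ (m + 1) := by
  have hcx := cos_nonneg_of_mem_Icc hx
  have hcy := cos_nonneg_of_mem_Icc hy
  have jensen : (m * cos x + cos y) / (m + 1) ≤ cos ((m * x + y) / (m + 1)) := by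
    have hm : (0 : ℝ) < m + 1 := by positivity
    calc (m * cos x + cos y) / (m + 1) = m / (m + 1) * cos x + 1 / (m + 1) * cos y := by ring
      _ ≤ cos (m / (m + 1) * x + 1 / (m + 1) * y) :=
        strictConcaveOn_cos_Icc.concaveOn.2 hx hy (by positivity) (by positivity) (by field_simp)
      _ = cos ((m * x + y) / (m + 1)) := by ring_nf
  calc cos x ^ m * cos y ≤ ((m * cos x + cos y) / (m + 1)) ^ (m + 1) :=
        pow_mul_le_mean_pow hcx hcy m
    _ ≤ cos ((m * x + y) / (m + 1)) ^ (m + 1) := by gcongr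

theorem cos_nat_mul_le_cos_pow {φ : ℝ} (n : ℕ) (hφ : |φ| ≤ π / 2) (hnφ : n * |φ| ≤ π) :
    cos (n * φ) ≤ cos φ ^ n := by
  have hcφ : 0 ≤ cos φ := cos_nonneg_of_mem_Icc (abs_le.1 hφ)
  by_cases hsmall : |n * φ| ≤ π / 2
  · obtain _ | m := n
    · simp
    have := cos_pow_mul_cos_le_cos_mean_pow (x := 0) (by simp; positivity) (abs_le.1 hsmall) m
    have hm : (m : ℝ) + 1 ≠ 0 := by positivity
    push_cast at this ⊢
    rwa [cos_zero, one_pow, one_mul, mul_zero, zero_add, mul_div_cancel_left₀ _ hm] at this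
  · have hcos : cos |n * φ| ≤ 0 := by
      apply cos_nonpos_of_pi_div_two_le_of_le (le_of_not_ge hsmall)
      rw [abs_mul, Nat.abs_cast]
      linarith [pi_pos]
    rw [cos_abs] at hcos
    exact hcos.trans (by positivity)

theorem cos_pow_mul_abs_sin_nat_mul_le {φ : ℝ} (n : ℕ) (hn : 2 ≤ n) (hnφ : n * |φ| ≤ π) :
    cos (π / (2 * ((n : ℝ) - 1))) ^ (n - 1) * |sin (n * φ)| ≤ cos φ ^ n := by
  obtain ⟨m, rfl⟩ : ∃ m, n = m + 1 := ⟨n - 1, by omega⟩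
  have hm : (1 : ℝ) ≤ m := by exact_mod_cast (by omega : 1 ≤ m)
  push_cast at hnφ ⊢
  have hsin : |sin ((m + 1) * φ)| = cos ((m + 1) * |φ| - π / 2) := by
    have hnonneg : 0 ≤ sin ((m + 1) * |φ|) := sin_nonneg_of_nonneg_of_le_pi (by positivity) hnφ
    rw [cos_sub_pi_div_two, ← abs_of_nonneg hnonneg]
    rcases abs_cases φ with ⟨h, _⟩ | ⟨h, _⟩ <;> simp [h, mul_neg, sin_neg, abs_neg]
  have hx : π / (2 * m) ∈ Icc (-(π / 2)) (π / 2) := by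
    have hpos : 0 ≤ π / (2 * m) := by positivity
    exact ⟨by linarith [pi_pos], div_le_div_of_nonneg_left pi_pos.le two_pos (by linarith)⟩
  have hy : (m + 1) * |φ| - π / 2 ∈ Icc (-(π / 2)) (π / 2) := by
    constructor <;> nlinarith [abs_nonneg φ]
  rw [add_sub_cancel_right, hsin]
  have := cos_pow_mul_cos_le_cos_mean_pow hx hy m
  rwa [show (m * (π / (2 * m)) + ((m + 1) * |φ| - π / 2)) / (m + 1) = |φ| by
    field_simp; ring, cos_abs] at this

theorem re_ofReal_mul_exp_pi_add_mul_I (r x : ℝ) :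
    ((r : ℂ) * Complex.exp ((π + x : ℝ) * Complex.I)).re = -(r * cos x) := by
  rw [Complex.re_ofReal_mul, Complex.exp_ofReal_mul_I_re, cos_add]
  simp

theorem im_ofReal_mul_exp_pi_add_mul_I (r x : ℝ) :
    ((r : ℂ) * Complex.exp ((π + x : ℝ) * Complex.I)).im = -(r * sin x) := by
  rw [Complex.im_ofReal_mul, Complex.exp_ofReal_mul_I_im, sin_add]
  simp

section Region

variable {n : ℕ} {r φ : ℝ}

theorem nat_mul_abs_le_pi (hφ : |φ| ≤ π / n) : n * |φ| ≤ π := by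
  rcases n.eq_zero_or_pos with rfl | hn
  · simpa using pi_pos.le
  · rwa [le_div_iff₀' (by positivity)] at hφ

theorem abs_le_pi_div_two (hn : 2 ≤ n) (hφ : |φ| ≤ π / n) : |φ| ≤ π / 2 :=
  hφ.trans (div_le_div_of_nonneg_left pi_pos.le two_pos (by exact_mod_cast hn))

theorem cos_pi_div_pos (hn : 2 < n) : 0 < cos (π / n) := by
  have hn' : (2 : ℝ) < n := by exact_mod_cast hn
  refine cos_pos_of_mem_Ioo ⟨?_, div_lt_div_of_pos_left pi_pos two_pos hn'⟩
  linarith [pi_pos, div_pos pi_pos (by linarith : (0 : ℝ) < n)]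

theorem cos_pi_div_le_cos (hφ : |φ| ≤ π / n) : cos (π / n) ≤ cos φ := by
  have hπn : π / n ≤ π := by
    rcases n.eq_zero_or_pos with rfl | hn
    · simpa using pi_pos.le
    · exact div_le_self pi_pos.le (by exact_mod_cast hn)
  rw [← cos_abs φ]
  exact cos_le_cos_of_nonneg_of_le_pi (abs_nonneg φ) hπn hφ

theorem le_one_of_mul_cos_pow_le (hn : 2 < n) (hr0 : 0 ≤ r) (hφ : |φ| ≤ π / n)
    (hr : r * cos φ ^ n ≤ cos (π / n) ^ n) : r ≤ 1 := by
  refine le_of_mul_le_mul_right ?_ (pow_pos (cos_pi_div_pos hn) n)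
  have := (cos_pi_div_pos hn).le
  calc r * cos (π / n) ^ n ≤ r * cos φ ^ n := by gcongr; exact cos_pi_div_le_cos hφ
    _ ≤ 1 * cos (π / n) ^ n := by rwa [one_mul]

theorem mul_cos_nat_mul_le (hn : 2 ≤ n) (hr0 : 0 ≤ r) (hφ : |φ| ≤ π / n)
    (hr : r * cos φ ^ n ≤ cos (π / n) ^ n) :
    r * cos (n * φ) ≤ cos (π / n) ^ n :=
  (mul_le_mul_of_nonneg_left
    (cos_nat_mul_le_cos_pow n (abs_le_pi_div_two hn hφ) (nat_mul_abs_le_pi hφ)) hr0).trans hr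

theorem mul_abs_sin_nat_mul_le (hn : 2 < n) (hr0 : 0 ≤ r) (hφ : |φ| ≤ π / n)
    (hr : r * cos φ ^ n ≤ cos (π / n) ^ n) :
    r * |sin (n * φ)| ≤ cos (π / n) ^ n * (cos (π / (2 * ((n : ℝ) - 1))))⁻¹ ^ (n - 1) := by
  have hcβ : 0 < cos (π / (2 * ((n : ℝ) - 1))) := by
    have hn' : (2 : ℝ) < n := by exact_mod_cast hn
    refine cos_pos_of_mem_Ioo ⟨?_, div_lt_div_of_pos_left pi_pos two_pos (by linarith)⟩
    linarith [pi_pos, div_pos pi_pos (by linarith : (0 : ℝ) < 2 * (n - 1))]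
  rw [inv_pow, ← div_eq_mul_inv, le_div_iff₀ (by positivity)]
  calc r * |sin (n * φ)| * cos (π / (2 * ((n : ℝ) - 1))) ^ (n - 1)
      = r * (cos (π / (2 * ((n : ℝ) - 1))) ^ (n - 1) * |sin (n * φ)|) := by ring
    _ ≤ r * cos φ ^ n := by
      gcongr
      exact cos_pow_mul_abs_sin_nat_mul_le n hn.le (nat_mul_abs_le_pi hφ)
    _ ≤ cos (π / n) ^ n := hr

end Region

theorem stmt_16 (n : ℕ) (hn : 3 ≤ n) :
    let τ : ℝ := Real.cos (π / n) ^ n * ((Real.cos (π / (2 * ((n : ℝ) - 1))))⁻¹) ^ (n - 1)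
    ∀ z : ℂ, (∃ r θ : ℝ, 0 ≤ r ∧
        r ≤ Real.cos (π / n) ^ n * ((Real.cos ((θ - π) / n))⁻¹) ^ n ∧
        θ ∈ Set.Ico 0 (2 * π) ∧ z = (r : ℂ) * Complex.exp (θ * Complex.I)) →
      z.re ∈ Set.Icc (-(Real.cos (π / n) ^ n)) 1 ∧ z.im ∈ Set.Icc (-τ) τ := by
  intro τ z ⟨r, θ, hr0, hr, ⟨hθ0, hθ2π⟩, hz⟩
  set φ := (θ - π) / n
  have hθ : θ = π + n * φ := by simp only [φ]; field_simp; ring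
  have hφ : |φ| ≤ π / n := by
    rw [abs_div, Nat.abs_cast]
    gcongr
    exact abs_le.2 ⟨by linarith, by linarith⟩
  have hr' : r * cos φ ^ n ≤ cos (π / n) ^ n := by
    have := (cos_pi_div_pos hn).trans_le (cos_pi_div_le_cos hφ)
    rwa [inv_pow, ← div_eq_mul_inv, le_div_iff₀ (by positivity)] at hr
  rw [hz, hθ, re_ofReal_mul_exp_pi_add_mul_I, im_ofReal_mul_exp_pi_add_mul_I]
  have hr1 := le_one_of_mul_cos_pow_le (by omega) hr0 hφ hr'
  refine ⟨⟨?_, ?_⟩, abs_le.1 ?_⟩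
  · linarith [mul_cos_nat_mul_le (by omega) hr0 hφ hr']
  · nlinarith [neg_one_le_cos (n * φ)]
  · rw [abs_neg, abs_mul, abs_of_nonneg hr0]
    exact mul_abs_sin_nat_mul_le hn hr0 hφ hr'
end
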